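/- For n ≥ 1, the signed count over all overpartitions π of n with at least one overlined part, weighted by (-1)^{ℓ_{N≤O}(π)} (where ℓ_{N≤O}(π) counts non-overlined parts of size ≤ the largest overlined part), equals p'_o(n) - p'_e(n), where p'_o(n) (resp. p'_e(n)) is the number of partitions of n whose smallest part appears an odd (resp. even) number of times. -/

import Mathlib

/-!
Let `J` be the set of part sizes, overlined or not, strictly below the largest overlined part `m`.
Overlining or un-overlining the smallest element of `J` keeps `m` and `J` fixed, changes
`ℓ_{N≤O}` by one, and is an involution, so all overpartitions with `J ≠ ∅` cancel. The survivors
have `m` as their only overlined part and no plain part below `m`; erasing the overline identifies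
them with the partitions of `n`, whose smallest part `m` then occurs `ℓ_{N≤O} + 1` times.
-/

open scoped Classical

/-- An overpartition of `n`: a finite set of overlined part sizes (the first
occurrence of a size may be overlined, so overlined parts are distinct)
together with a multiset of non-overlined parts, all parts positive,
with total sum `n`. -/
structure Overpartition (n : ℕ) where
  overParts : Finset ℕ
  plain : Multiset ℕ
  over_pos : ∀ x ∈ overParts, 0 < x
  plain_pos : ∀ x ∈ plain, 0 < x
  sum_eq : (∑ x ∈ overParts, x) + plain.sum = n

open Finset

theorem card_filter_even_sub_card_filter_odd {α : Type*} (s : Finset α) (f : α → ℕ) :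
    (#(s.filter fun a => Even (f a)) : ℤ) - #(s.filter fun a => Odd (f a)) =
      ∑ a ∈ s, (-1) ^ f a := by
  rw [← sum_filter_add_sum_filter_not s (fun a => Even (f a)),
    sum_congr rfl (g := fun _ => 1) fun a ha => (mem_filter.1 ha).2.neg_one_pow,
    sum_congr rfl (g := fun _ => -1) fun a ha =>
      (Nat.not_even_iff_odd.1 (mem_filter.1 ha).2).neg_one_pow]
  simp [sub_eq_add_neg]

theorem Nat.Partition.sInf_mem_parts {n : ℕ} (hn : 0 < n) (p : n.Partition) :
    sInf {x | x ∈ p.parts} ∈ p.parts := by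
  refine Nat.sInf_mem (Multiset.exists_mem_of_ne_zero fun h0 => ?_)
  have := p.parts_sum
  rw [h0, Multiset.sum_zero] at this
  omega

namespace Overpartition

variable {n : ℕ}

theorem ext {π ρ : Overpartition n} (hO : π.overParts = ρ.overParts) (hP : π.plain = ρ.plain) :
    π = ρ := by
  cases π; cases ρ; simp_all

def parts (π : Overpartition n) : Multiset ℕ := π.overParts.val + π.plain

theorem mem_parts {π : Overpartition n} {x : ℕ} : x ∈ π.parts ↔ x ∈ π.overParts ∨ x ∈ π.plain :=
  Multiset.mem_add

def toPartition (π : Overpartition n) : n.Partition where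
  parts := π.parts
  parts_pos hx := (mem_parts.1 hx).elim (π.over_pos _) (π.plain_pos _)
  parts_sum := by rw [parts, Multiset.sum_add, Finset.sum_val]; exact π.sum_eq

theorem overParts_subset_range (π : Overpartition n) : π.overParts ⊆ range (n + 1) := fun _ hx =>
  mem_range_succ_iff.2 <| (single_le_sum (fun _ _ => Nat.zero_le _) hx).trans
    (π.sum_eq ▸ Nat.le_add_right _ _)

instance : Finite (Overpartition n) :=
  Finite.of_injective (β := n.Partition × (range (n + 1)).powerset)
    (fun π => (π.toPartition, ⟨π.overParts, mem_powerset.2 π.overParts_subset_range⟩))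
    fun π ρ h => by
      simp only [Prod.mk.injEq, Subtype.mk.injEq, Nat.Partition.ext_iff] at h
      exact ext h.2 (add_left_cancel
        (h.1.trans (congrArg (fun s : Finset ℕ => s.val + ρ.plain) h.2.symm)))

noncomputable instance : Fintype (Overpartition n) := Fintype.ofFinite _

def maxOver (π : Overpartition n) : ℕ := π.overParts.sup id

theorem le_maxOver {π : Overpartition n} {x : ℕ} (hx : x ∈ π.overParts) : x ≤ π.maxOver :=
  le_sup (f := id) hx

theorem maxOver_mem {π : Overpartition n} (h : π.overParts.Nonempty) :
    π.maxOver ∈ π.overParts := by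
  obtain ⟨x, hx, hmax⟩ := exists_mem_eq_sup _ h id
  rw [maxOver, hmax]; exact hx

/-- The statistic `ℓ_{N≤O}`. -/
def ell (π : Overpartition n) : ℕ := Multiset.card (π.plain.filter (· ≤ π.maxOver))

theorem card_filter_exists_le_eq_ell (π : Overpartition n) :
    Multiset.card (π.plain.filter fun x => ∃ y ∈ π.overParts, x ≤ y) = π.ell := by
  rw [ell, Multiset.filter_congr fun x hx => (Finset.le_sup_iff (π.plain_pos x hx)).symm]
  rfl

def smallParts (π : Overpartition n) : Finset ℕ := π.parts.toFinset.filter (· < π.maxOver)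

theorem mem_smallParts {π : Overpartition n} {x : ℕ} :
    x ∈ π.smallParts ↔ x ∈ π.parts ∧ x < π.maxOver := by
  simp [smallParts]

theorem overParts_nonempty_of_smallParts_nonempty {π : Overpartition n}
    (h : π.smallParts.Nonempty) : π.overParts.Nonempty := by
  obtain ⟨x, hx⟩ := h
  refine nonempty_iff_ne_empty.2 fun hO => ?_
  have := (mem_smallParts.1 hx).2
  simp [maxOver, hO] at this

theorem mem_plain_of_mem_smallParts {π : Overpartition n} {x : ℕ} (hx : x ∈ π.smallParts)
    (hxO : x ∉ π.overParts) : x ∈ π.plain :=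
  (mem_parts.1 (mem_smallParts.1 hx).1).resolve_left hxO

def unbar (π : Overpartition n) (x : ℕ) (hx : x ∈ π.overParts) : Overpartition n where
  overParts := π.overParts.erase x
  plain := x ::ₘ π.plain
  over_pos y hy := π.over_pos y (mem_of_mem_erase hy)
  plain_pos := Multiset.forall_mem_cons.2 ⟨π.over_pos x hx, π.plain_pos⟩
  sum_eq := by
    have := sum_erase_add π.overParts (fun y => y) hx
    rw [Multiset.sum_cons]; linarith [π.sum_eq]

def bar (π : Overpartition n) (x : ℕ) (hx : x ∈ π.plain) (hxO : x ∉ π.overParts) :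
    Overpartition n where
  overParts := insert x π.overParts
  plain := π.plain.erase x
  over_pos := forall_mem_insert _ _ _ |>.2 ⟨π.plain_pos x hx, π.over_pos⟩
  plain_pos y hy := π.plain_pos y (Multiset.mem_of_mem_erase hy)
  sum_eq := by
    have := Multiset.sum_erase hx
    rw [sum_insert hxO]; linarith [π.sum_eq]

section Toggle

variable (π : Overpartition n) {x : ℕ}

theorem bar_unbar (hx : x ∈ π.overParts) :
    (π.unbar x hx).bar x (Multiset.mem_cons_self _ _) (notMem_erase _ _) = π :=
  ext (insert_erase hx) (Multiset.erase_cons_head _ _)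

theorem unbar_bar (hx : x ∈ π.plain) (hxO : x ∉ π.overParts) :
    (π.bar x hx hxO).unbar x (mem_insert_self _ _) = π :=
  ext (erase_insert hxO) (Multiset.cons_erase hx)

theorem parts_unbar (hx : x ∈ π.overParts) : (π.unbar x hx).parts = π.parts := by
  rw [parts, unbar, erase_val, Multiset.add_cons, ← Multiset.cons_add,
    Multiset.cons_erase (mem_def.1 hx), parts]

theorem parts_bar (hx : x ∈ π.plain) (hxO : x ∉ π.overParts) :
    (π.bar x hx hxO).parts = π.parts := by
  rw [parts, bar, insert_val_of_notMem hxO, Multiset.cons_add, ← Multiset.add_cons,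
    Multiset.cons_erase hx, parts]

theorem maxOver_unbar (hx : x ∈ π.overParts) (hlt : x < π.maxOver) :
    (π.unbar x hx).maxOver = π.maxOver :=
  le_antisymm (sup_mono (erase_subset _ _))
    (le_sup (f := id) (mem_erase.2 ⟨hlt.ne', maxOver_mem ⟨x, hx⟩⟩))

theorem maxOver_bar (hx : x ∈ π.plain) (hxO : x ∉ π.overParts) (hle : x ≤ π.maxOver) :
    (π.bar x hx hxO).maxOver = π.maxOver := by
  simp only [maxOver, bar, sup_insert, id, sup_eq_right]
  exact hle

theorem smallParts_unbar (hx : x ∈ π.overParts) (hlt : x < π.maxOver) :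
    (π.unbar x hx).smallParts = π.smallParts := by
  rw [smallParts, parts_unbar, maxOver_unbar _ _ hlt, smallParts]

theorem smallParts_bar (hx : x ∈ π.plain) (hxO : x ∉ π.overParts) (hlt : x < π.maxOver) :
    (π.bar x hx hxO).smallParts = π.smallParts := by
  rw [smallParts, parts_bar, maxOver_bar _ _ _ hlt.le, smallParts]

theorem ell_unbar (hx : x ∈ π.overParts) (hlt : x < π.maxOver) :
    (π.unbar x hx).ell = π.ell + 1 := by
  rw [ell, maxOver_unbar _ _ hlt]
  simp [unbar, ell, hlt.le]

theorem ell_bar (hx : x ∈ π.plain) (hxO : x ∉ π.overParts) (hlt : x < π.maxOver) :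
    (π.bar x hx hxO).ell + 1 = π.ell := by
  rw [ell, maxOver_bar _ _ _ hlt.le, ell]
  conv_rhs => rw [← Multiset.cons_erase hx]
  simp [bar, hlt.le]

end Toggle

def toggle (π : Overpartition n) : Overpartition n :=
  if h : π.smallParts.Nonempty then
    if hj : π.smallParts.min' h ∈ π.overParts then π.unbar _ hj
    else π.bar _ (mem_plain_of_mem_smallParts (min'_mem _ h) hj) hj
  else π

theorem toggle_of_smallParts_eq_empty {π : Overpartition n} (h : π.smallParts = ∅) :
    π.toggle = π :=
  dif_neg (not_nonempty_iff_eq_empty.2 h)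

theorem toggle_eq_unbar {π : Overpartition n} {x : ℕ} (hx : IsLeast (π.smallParts : Set ℕ) x)
    (hxO : x ∈ π.overParts) : π.toggle = π.unbar x hxO := by
  have h : π.smallParts.Nonempty := ⟨x, hx.1⟩
  obtain rfl : π.smallParts.min' h = x := (isLeast_min' _ h).unique hx
  rw [toggle, dif_pos h, dif_pos hxO]

theorem toggle_eq_bar {π : Overpartition n} {x : ℕ} (hx : IsLeast (π.smallParts : Set ℕ) x)
    (hxO : x ∉ π.overParts) :
    π.toggle = π.bar x (mem_plain_of_mem_smallParts hx.1 hxO) hxO := by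
  have h : π.smallParts.Nonempty := ⟨x, hx.1⟩
  obtain rfl : π.smallParts.min' h = x := (isLeast_min' _ h).unique hx
  rw [toggle, dif_pos h, dif_neg hxO]

theorem smallParts_toggle (π : Overpartition n) : π.toggle.smallParts = π.smallParts := by
  obtain h | h := π.smallParts.eq_empty_or_nonempty
  · rw [toggle_of_smallParts_eq_empty h]
  obtain ⟨j, hj⟩ : ∃ j, IsLeast (π.smallParts : Set ℕ) j := ⟨_, isLeast_min' _ h⟩
  have hlt := (mem_smallParts.1 hj.1).2
  by_cases hjO : j ∈ π.overParts
  · rw [toggle_eq_unbar hj hjO, smallParts_unbar _ _ hlt]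
  · rw [toggle_eq_bar hj hjO, smallParts_bar _ _ _ hlt]

theorem neg_one_pow_ell_toggle {π : Overpartition n} (h : π.smallParts.Nonempty) :
    (-1 : ℤ) ^ π.toggle.ell = -(-1) ^ π.ell := by
  obtain ⟨j, hj⟩ : ∃ j, IsLeast (π.smallParts : Set ℕ) j := ⟨_, isLeast_min' _ h⟩
  have hlt := (mem_smallParts.1 hj.1).2
  by_cases hjO : j ∈ π.overParts
  · rw [toggle_eq_unbar hj hjO, ell_unbar _ _ hlt, pow_succ, mul_neg_one]
  · rw [toggle_eq_bar hj hjO, ← ell_bar _ _ _ hlt, pow_succ, mul_neg_one, neg_neg]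

theorem toggle_involutive : Function.Involutive (toggle (n := n)) := by
  intro π
  obtain h | h := π.smallParts.eq_empty_or_nonempty
  · rw [toggle_of_smallParts_eq_empty h, toggle_of_smallParts_eq_empty h]
  obtain ⟨j, hj⟩ : ∃ j, IsLeast (π.smallParts : Set ℕ) j := ⟨_, isLeast_min' _ h⟩
  have hlt := (mem_smallParts.1 hj.1).2
  by_cases hjO : j ∈ π.overParts
  · rw [toggle_eq_unbar hj hjO,
      toggle_eq_bar (by rwa [smallParts_unbar _ _ hlt]) (notMem_erase _ _), bar_unbar]
  · rw [toggle_eq_bar hj hjO, toggle_eq_unbar (by rwa [smallParts_bar _ _ _ hlt])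
      (mem_insert_self _ _), unbar_bar]

theorem sum_neg_one_pow_ell_of_smallParts_nonempty :
    ∑ π ∈ univ.filter (fun π : Overpartition n => π.smallParts.Nonempty), (-1 : ℤ) ^ π.ell = 0 := by
  refine sum_involution (fun π _ => π.toggle) (fun π hπ => ?_) (fun π hπ _ hfix => ?_)
    (fun π hπ => ?_) (fun π _ => toggle_involutive π)
  · rw [neg_one_pow_ell_toggle (mem_filter.1 hπ).2, add_neg_cancel]
  · have := neg_one_pow_ell_toggle (mem_filter.1 hπ).2
    rw [hfix, self_eq_neg] at this
    exact pow_ne_zero _ (by norm_num) this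
  · simpa [smallParts_toggle] using hπ

section FixedPoints

variable {π : Overpartition n}

theorem maxOver_le_of_mem_parts (h : π.smallParts = ∅) {x : ℕ} (hx : x ∈ π.parts) :
    π.maxOver ≤ x :=
  not_lt.1 fun hlt => eq_empty_iff_forall_notMem.1 h x (mem_smallParts.2 ⟨hx, hlt⟩)

theorem overParts_eq_singleton (hO : π.overParts.Nonempty) (h : π.smallParts = ∅) :
    π.overParts = {π.maxOver} :=
  eq_singleton_iff_unique_mem.2 ⟨maxOver_mem hO, fun _ hx =>
    le_antisymm (le_maxOver hx) (maxOver_le_of_mem_parts h (mem_parts.2 (Or.inl hx)))⟩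

theorem sInf_parts (hO : π.overParts.Nonempty) (h : π.smallParts = ∅) :
    sInf {x | x ∈ π.parts} = π.maxOver :=
  IsLeast.csInf_eq ⟨mem_parts.2 (Or.inl (maxOver_mem hO)), fun _ => maxOver_le_of_mem_parts h⟩

theorem count_maxOver_parts (hO : π.overParts.Nonempty) (h : π.smallParts = ∅) :
    π.parts.count π.maxOver = π.ell + 1 := by
  rw [parts, Multiset.count_add, overParts_eq_singleton hO h, singleton_val,
    Multiset.count_singleton_self, add_comm, Multiset.count_eq_card_filter_eq, ell,
    Multiset.filter_congr fun x hx => ⟨Eq.ge, fun hle =>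
      le_antisymm (maxOver_le_of_mem_parts h (mem_parts.2 (Or.inr hx))) hle⟩]

end FixedPoints

noncomputable def overlineSmallestPart (hn : 0 < n) (p : n.Partition) : Overpartition n where
  overParts := {sInf {x | x ∈ p.parts}}
  plain := p.parts.erase (sInf {x | x ∈ p.parts})
  over_pos := by simpa using p.parts_pos (p.sInf_mem_parts hn)
  plain_pos _ hx := p.parts_pos (Multiset.mem_of_mem_erase hx)
  sum_eq := by rw [sum_singleton, Multiset.sum_erase (p.sInf_mem_parts hn), p.parts_sum]

section OverlineSmallestPart

variable (hn : 0 < n) (p : n.Partition)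

theorem parts_overlineSmallestPart : (overlineSmallestPart hn p).parts = p.parts := by
  rw [parts, overlineSmallestPart, singleton_val, Multiset.singleton_add,
    Multiset.cons_erase (p.sInf_mem_parts hn)]

theorem maxOver_overlineSmallestPart :
    (overlineSmallestPart hn p).maxOver = sInf {x | x ∈ p.parts} :=
  sup_singleton

theorem smallParts_overlineSmallestPart : (overlineSmallestPart hn p).smallParts = ∅ := by
  refine eq_empty_iff_forall_notMem.2 fun x hx => ?_
  rw [mem_smallParts, parts_overlineSmallestPart, maxOver_overlineSmallestPart] at hx
  exact hx.2.not_ge (Nat.sInf_le hx.1)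

end OverlineSmallestPart

theorem sum_neg_one_pow_ell_of_smallParts_eq_empty (hn : 0 < n) :
    ∑ π ∈ univ.filter (fun π : Overpartition n => π.overParts.Nonempty ∧ π.smallParts = ∅),
      (-1 : ℤ) ^ π.ell = -∑ p : n.Partition, (-1) ^ p.parts.count (sInf {x | x ∈ p.parts}) := by
  rw [← sum_neg_distrib]
  refine sum_nbij' toPartition (overlineSmallestPart hn) (fun _ _ => mem_univ _)
    (fun p _ => ?_) (fun π hπ => ?_) (fun p _ => ?_) (fun π hπ => ?_)
  · exact mem_filter.2 ⟨mem_univ _, singleton_nonempty _, smallParts_overlineSmallestPart hn p⟩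
  · obtain ⟨hO, h⟩ := (mem_filter.1 hπ).2
    refine ext ?_ ?_
    · show {sInf {x | x ∈ π.parts}} = _
      rw [sInf_parts hO h, overParts_eq_singleton hO h]
    · show π.parts.erase (sInf {x | x ∈ π.parts}) = _
      rw [sInf_parts hO h, parts, overParts_eq_singleton hO h, singleton_val,
        Multiset.singleton_add, Multiset.erase_cons_head]
  · exact Nat.Partition.ext (parts_overlineSmallestPart hn p)
  · obtain ⟨hO, h⟩ := (mem_filter.1 hπ).2
    show _ = -(-1) ^ π.parts.count (sInf {x | x ∈ π.parts})
    rw [sInf_parts hO h, count_maxOver_parts hO h, pow_succ, mul_neg_one, neg_neg]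

theorem sum_neg_one_pow_ell_of_overParts_nonempty :
    ∑ π ∈ univ.filter (fun π : Overpartition n => π.overParts.Nonempty), (-1 : ℤ) ^ π.ell =
      ∑ π ∈ univ.filter (fun π : Overpartition n => π.overParts.Nonempty ∧ π.smallParts = ∅),
        (-1 : ℤ) ^ π.ell := by
  have hcancel : ∑ π ∈ univ.filter (fun π : Overpartition n =>
      π.overParts.Nonempty ∧ ¬π.smallParts = ∅), (-1 : ℤ) ^ π.ell = 0 := by
    rw [filter_congr (q := fun π : Overpartition n => π.smallParts.Nonempty) fun π _ =>
      ⟨fun h => nonempty_iff_ne_empty.2 h.2,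
        fun h => ⟨overParts_nonempty_of_smallParts_nonempty h, nonempty_iff_ne_empty.1 h⟩⟩]
    exact sum_neg_one_pow_ell_of_smallParts_nonempty
  rw [← sum_filter_add_sum_filter_not (univ.filter _) (fun π : Overpartition n =>
    π.smallParts = ∅), filter_filter, filter_filter, hcancel, add_zero]

end Overpartition

theorem stmt_12 (n : ℕ) (hn : 1 ≤ n) :
    (Nat.card {π : Overpartition n // π.overParts.Nonempty ∧
        Even (Multiset.card (π.plain.filter (fun x => ∃ y ∈ π.overParts, x ≤ y)))} : ℤ) -
      Nat.card {π : Overpartition n // π.overParts.Nonempty ∧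
        Odd (Multiset.card (π.plain.filter (fun x => ∃ y ∈ π.overParts, x ≤ y)))} =
    (Nat.card {p : n.Partition //
        Odd (p.parts.count (sInf {x | x ∈ p.parts}))} : ℤ) -
      Nat.card {p : n.Partition //
        Even (p.parts.count (sInf {x | x ∈ p.parts}))} := by
  simp only [Nat.card_eq_fintype_card, Fintype.card_subtype, ← filter_filter,
    Overpartition.card_filter_exists_le_eq_ell]
  rw [card_filter_even_sub_card_filter_odd, ← neg_sub, card_filter_even_sub_card_filter_odd,
    Overpartition.sum_neg_one_pow_ell_of_overParts_nonempty,
    Overpartition.sum_neg_one_pow_ell_of_smallParts_eq_empty hn]
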